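/- Let E be a countable subset of ℝ. Then there exists an uncountable set S of positive Liouville numbers such that every ξ ∈ S has simultaneously the following properties: (i) for every t ∈ E, ξ + t is a Liouville number; (ii) for every nonzero t ∈ E, ξ·t is a Liouville number; (iii) for every nonzero t ∈ E, the sequence defined by ξ_0 = ξ and ξ_n = exp(t·ξ_{n−1}) for n ≥ 1 consists entirely of Liouville numbers; (iv) for every nonzero rational number r, the number ξ^r (defined as exp(r·log ξ), which makes sense since ξ > 0) is a Liouville number. -/

import Mathlib

/-!
Liouville numbers form a residual subset of `ℝ`, and preimages of residual sets under continuous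
open maps are residual. Each required property of `ξ = exp y` says that `g y` is Liouville for one
of countably many continuous open maps `g` (such as `y ↦ exp y + t` or `y ↦ exp (r * y)`), so the
set of admissible `y` is a countable intersection of residual sets, hence residual, hence
uncountable by the Baire category theorem.
-/

open Set Filter Topology Function Real

lemma Set.Countable.isMeagre {X : Type*} [TopologicalSpace X] [T1Space X]
    [∀ x : X, (𝓝[≠] x).NeBot] {s : Set X} (hs : s.Countable) : IsMeagre s := by
  rw [← biUnion_of_singleton s]
  exact isMeagre_biUnion hs fun x _ =>
    (isClosed_singleton.isNowhereDense_iff.2 (interior_singleton x)).isMeagre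

lemma not_countable_of_mem_residual {X : Type*} [TopologicalSpace X] [BaireSpace X] [Nonempty X]
    [T1Space X] [∀ x : X, (𝓝[≠] x).NeBot] {s : Set X} (hs : s ∈ residual X) : ¬ s.Countable :=
  fun hc => not_isMeagre_of_mem_residual hs hc.isMeagre

lemma exists_not_countable_of_eventually_residual {X Y : Type*} [TopologicalSpace X]
    [BaireSpace X] [Nonempty X] [T1Space X] [∀ x : X, (𝓝[≠] x).NeBot] {f : X → Y}
    (hf : Injective f) {P : Y → Prop} (h : ∀ᶠ x in residual X, P (f x)) :
    ∃ S : Set Y, ¬ S.Countable ∧ ∀ y ∈ S, P y :=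
  ⟨{y | P y}, fun hc => not_countable_of_mem_residual h (hc.preimage hf), fun _ => id⟩

lemma IsOpenMap.iterate {X : Type*} [TopologicalSpace X] {f : X → X} (hf : IsOpenMap f) :
    ∀ n : ℕ, IsOpenMap f^[n]
  | 0 => IsOpenMap.id
  | n + 1 => (hf.iterate n).comp hf

lemma eventually_residual_liouville_comp {X : Type*} [TopologicalSpace X] {f : X → ℝ}
    (hc : Continuous f) (ho : IsOpenMap f) : ∀ᶠ x in residual X, Liouville (f x) :=
  tendsto_residual_of_isOpenMap hc ho eventually_residual_liouville

lemma Real.isOpenMap_exp : IsOpenMap exp :=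
  isOpenEmbedding_exp.isOpenMap

lemma Real.isOpenMap_exp_const_mul {t : ℝ} (ht : t ≠ 0) : IsOpenMap fun x => exp (t * x) :=
  isOpenMap_exp.comp (Homeomorph.mulLeft₀ t ht).isOpenMap

/-- Let `E` be a countable subset of `ℝ`. Then there is an uncountable set `S`
of positive Liouville numbers `ξ` such that simultaneously:
(i) `ξ + t` is Liouville for all `t ∈ E`;
(ii) `ξ * t` is Liouville for all nonzero `t ∈ E`;
(iii) for every nonzero `t ∈ E`, the sequence `ξ_0 = ξ`, `ξ_n = exp (t * ξ_{n-1})`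
consists of Liouville numbers;
(iv) `ξ ^ r = exp (r * log ξ)` is Liouville for every nonzero rational `r`. -/
theorem uncountable_liouville_stable_family (E : Set ℝ) (hE : E.Countable) :
    ∃ S : Set ℝ, ¬ S.Countable ∧ ∀ ξ ∈ S,
      (0 < ξ ∧ Liouville ξ) ∧
      (∀ t ∈ E, Liouville (ξ + t)) ∧
      (∀ t ∈ E, t ≠ 0 → Liouville (ξ * t)) ∧
      (∀ t ∈ E, t ≠ 0 → ∀ n : ℕ, Liouville ((fun x => Real.exp (t * x))^[n] ξ)) ∧
      (∀ r : ℚ, r ≠ 0 → Liouville (Real.exp (r * Real.log ξ))) := by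
  refine exists_not_countable_of_eventually_residual exp_injective ?_
  have hE₀ : (E \ {0}).Countable := hE.mono sdiff_subset
  have h_comp_exp {g : ℝ → ℝ} (hc : Continuous g) (ho : IsOpenMap g) :
      ∀ᶠ y in residual ℝ, Liouville (g (exp y)) :=
    eventually_residual_liouville_comp (hc.comp continuous_exp) (ho.comp isOpenMap_exp)
  have h_add : ∀ᶠ y in residual ℝ, ∀ t ∈ E, Liouville (exp y + t) :=
    (eventually_countable_ball hE).2 fun t _ =>
      h_comp_exp (continuous_add_const t) (Homeomorph.addRight t).isOpenMap
  have h_mul : ∀ᶠ y in residual ℝ, ∀ t ∈ E \ {0}, Liouville (exp y * t) :=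
    (eventually_countable_ball hE₀).2 fun t ht =>
      h_comp_exp (continuous_mul_const t) (Homeomorph.mulRight₀ t ht.2).isOpenMap
  have h_iter : ∀ᶠ y in residual ℝ, ∀ t ∈ E \ {0}, ∀ n : ℕ,
      Liouville ((fun x => exp (t * x))^[n] (exp y)) :=
    (eventually_countable_ball hE₀).2 fun t ht => eventually_countable_forall.2 fun n =>
      h_comp_exp ((continuous_exp.comp (continuous_const_mul t)).iterate n)
        ((isOpenMap_exp_const_mul ht.2).iterate n)
  have h_pow : ∀ᶠ y in residual ℝ, ∀ r ∈ {r : ℚ | r ≠ 0}, Liouville (exp (r * y)) :=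
    (eventually_countable_ball (Set.to_countable _)).2 fun r hr =>
      eventually_residual_liouville_comp (continuous_exp.comp (continuous_const_mul _))
        (isOpenMap_exp_const_mul (Rat.cast_ne_zero.2 hr))
  filter_upwards [eventually_residual_liouville_comp continuous_exp isOpenMap_exp,
    h_add, h_mul, h_iter, h_pow] with y h_exp h_add h_mul h_iter h_pow
  refine ⟨⟨exp_pos y, h_exp⟩, h_add, fun t ht ht₀ => h_mul t ⟨ht, ht₀⟩,
    fun t ht ht₀ => h_iter t ⟨ht, ht₀⟩, ?_⟩
  simpa only [log_exp] using h_pow
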